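/- (Interaction energy law) Assume C, K > 0 and CK > R^2, and let d_i ≠ d_j be two dislocation points in a bounded open Ω ⊂ R^2 with u_i, w_i, u_j, w_j the corresponding single-dislocation fields. Then ∫_Ω (C u_i·u_j + K w_i·w_j + R u_i·w_j + R u_j·w_i) dx dy = ((C b_u^i b_u^j + K b_w^i b_w^j + R b_u^i b_w^j + R b_w^i b_u^j)/(2π)) · ln(1/|d_i − d_j|) + O(1), where the O(1) term is bounded in terms of Ω and the Burgers moduli, uniformly as |d_i − d_j| → 0 with both points staying a fixed distance from ∂Ω. -/

import Mathlib

open Real MeasureTheory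

def dot (p q : ℝ × ℝ) : ℝ := p.1 * q.1 + p.2 * q.2

def perp (p : ℝ × ℝ) : ℝ × ℝ := (-p.2, p.1)

noncomputable def dis (b : ℝ) (d0 : ℝ × ℝ) (z : ℝ × ℝ) : ℝ × ℝ :=
  (b / (2 * π * ((z.1 - d0.1) ^ 2 + (z.2 - d0.2) ^ 2))) • perp (z - d0)

/-! In complex notation the integrand is `S * Re ((z - a)⁻¹ * conj (z - b)⁻¹)` with
`S = (C b_u^i b_u^j + K b_w^i b_w^j + R b_u^i b_w^j + R b_w^i b_u^j) / (4π²)`, so it suffices to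
show that the integral of this kernel over `Ω` is `2π log (1 / |a - b|) + O(1)`.

The kernel is at most `|a - b|⁻¹ (|z - a|⁻¹ + |z - b|⁻¹)`, and `|z - c|⁻¹` integrates to `2πr`
over a disc of radius `r`; hence the disc of radius `2|a - b|` about `b` contributes `O(1)`. So
does the part of `Ω` at distance `≥ δ/2` from `b`, where the kernel is at most
`(2/δ) |z - a|⁻¹`. On the annulus `2|a - b| ≤ |z - b| ≤ δ/2` the kernel is integrated exactly:
its mean over the circle of radius `t` about `b` is `t⁻²`, by the mean value property of the
holomorphic function `(z - b) / (z - a)`, which gives `2π log (δ / (4|a - b|))`. When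
`|a - b| ≥ δ/4` the crude bound alone suffices. -/

open Metric Set
open scoped ComplexConjugate

lemma integrableOn_ball_inv_norm (R : ℝ) : IntegrableOn (fun z : ℂ => ‖z‖⁻¹) (ball 0 R) :=
  integrableOn_ball_of_norm_le_rpow (C := 1) (α := 1) (by simp) (by simp)
    (.of_forall fun z => by simp [Real.rpow_neg_one]) (by fun_prop)

lemma integral_ball_inv_norm {R : ℝ} (hR : 0 ≤ R) :
    ∫ z in ball (0 : ℂ) R, ‖z‖⁻¹ = 2 * π * R := by
  have hball : ∀ z : ℂ, (ball 0 R).indicator (fun z => ‖z‖⁻¹) z = (Iio R).indicator (·⁻¹) ‖z‖ :=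
    fun z => by by_cases h : ‖z‖ < R <;> simp [h, indicator]
  have hrad : ∫ y in Ioi (0 : ℝ), y ^ (2 - 1) • (Iio R).indicator (·⁻¹) y = R := by
    rw [setIntegral_congr_fun measurableSet_Ioi (g := (Iio R).indicator 1) fun y hy => by
        by_cases h : y < R <;> simp [h, mul_inv_cancel₀ (ne_of_gt (mem_Ioi.1 hy))],
      setIntegral_indicator measurableSet_Iio, Ioi_inter_Iio]
    simp [hR]
  rw [← integral_indicator measurableSet_ball, funext hball, integral_fun_norm_addHaar,
    Complex.finrank_real_complex, hrad, Measure.real, Complex.volume_ball]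
  simp only [ENNReal.ofReal_one, one_pow, one_mul, ENNReal.coe_toReal, NNReal.coe_real_pi,
    smul_eq_mul, nsmul_eq_mul, Nat.cast_ofNat]
  ring

lemma indicator_ball_inv_norm_sub (c : ℂ) (R : ℝ) :
    (ball c R).indicator (fun z => ‖z - c‖⁻¹) =
      fun z => (ball 0 R).indicator (‖·‖⁻¹) (z - c) := by
  ext z
  simp [indicator, dist_eq_norm]

lemma integrableOn_ball_inv_norm_sub (c : ℂ) (R : ℝ) :
    IntegrableOn (fun z => ‖z - c‖⁻¹) (ball c R) := by
  rw [← integrable_indicator_iff measurableSet_ball, indicator_ball_inv_norm_sub]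
  exact ((integrable_indicator_iff measurableSet_ball).2
    (integrableOn_ball_inv_norm R)).comp_sub_right c

lemma integral_ball_inv_norm_sub (c : ℂ) {R : ℝ} (hR : 0 ≤ R) :
    ∫ z in ball c R, ‖z - c‖⁻¹ = 2 * π * R := by
  rw [← integral_indicator measurableSet_ball, indicator_ball_inv_norm_sub,
    integral_sub_right_eq_self (fun z => (ball (0 : ℂ) R).indicator (‖·‖⁻¹) z),
    integral_indicator measurableSet_ball, integral_ball_inv_norm hR]

lemma setIntegral_inv_norm_sub_le {c : ℂ} {R : ℝ} (hR : 0 ≤ R) {s : Set ℂ}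
    (hs : s ⊆ ball c R) : ∫ z in s, ‖z - c‖⁻¹ ≤ 2 * π * R :=
  integral_ball_inv_norm_sub c hR ▸ setIntegral_mono_set (integrableOn_ball_inv_norm_sub c R)
    (.of_forall fun _ => by positivity) hs.eventuallyLE

lemma polarCoord_symm_add_eq_circleMap (b : ℂ) (p : ℝ × ℝ) :
    Complex.polarCoord.symm p + b = circleMap b p.1 p.2 := by
  simp [circleMap, Complex.exp_mul_I, ← Complex.ofReal_cos, ← Complex.ofReal_sin, add_comm]

lemma setIntegral_Ioo_circleMap_eq_circleAverage {E : Type*} [NormedAddCommGroup E]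
    [NormedSpace ℝ E] (f : ℂ → E) (c : ℂ) (R : ℝ) :
    ∫ θ in Ioo (-π) π, f (circleMap c R θ) = (2 * π) • circleAverage f c R := by
  rw [circleAverage_eq_integral_add (-π), smul_inv_smul₀ (by positivity),
    intervalIntegral.integral_comp_add_right (fun θ => f (circleMap c R θ)),
    intervalIntegral.integral_of_le (by linarith [pi_pos]), integral_Ioc_eq_integral_Ioo]
  ring_nf

lemma setIntegral_annulus_eq_circleAverage {E : Type*} [NormedAddCommGroup E] [NormedSpace ℝ E]
    [CompleteSpace E] {f : ℂ → E} {b : ℂ} {r₀ r₁ : ℝ} (h₀ : 0 < r₀) (hr : r₀ ≤ r₁)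
    (hf : ContinuousOn f (closedBall b r₁ \ ball b r₀)) :
    ∫ z in closedBall b r₁ \ ball b r₀, f z =
      ∫ t in r₀..r₁, (2 * π * t) • circleAverage f b t := by
  set A := closedBall b r₁ \ ball b r₀
  set g : ℝ × ℝ → E := fun p => p.1 • f (circleMap b p.1 p.2)
  have hmem : ∀ {t : ℝ} (θ : ℝ), 0 < t → (circleMap b t θ ∈ A ↔ t ∈ Icc r₀ r₁) :=
    fun θ ht => by
      simp [A, dist_eq_norm, circleMap_sub_center, norm_circleMap_zero, abs_of_pos ht, and_comm]
  have hpolar : ∀ p ∈ polarCoord.target,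
      p.1 • A.indicator f (Complex.polarCoord.symm p + b) =
        (Icc r₀ r₁ ×ˢ univ).indicator g p := by
    rintro ⟨t, θ⟩ ⟨ht : 0 < t, -⟩
    rw [polarCoord_symm_add_eq_circleMap]
    by_cases h : t ∈ Icc r₀ r₁
    · simp [indicator_of_mem ((hmem θ ht).2 h), indicator_of_mem (mk_mem_prod h (mem_univ θ)), g]
    · simp [indicator_of_notMem (mt (hmem θ ht).1 h), h]
  have hcont : ContinuousOn g (Icc r₀ r₁ ×ˢ Icc (-π) π) := by
    refine continuousOn_fst.smul (hf.comp (by unfold circleMap; fun_prop : Continuous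
      fun p : ℝ × ℝ => circleMap b p.1 p.2).continuousOn fun p hp => ?_)
    exact (hmem p.2 (h₀.trans_le hp.1.1)).2 hp.1
  have hint : IntegrableOn g (Icc r₀ r₁ ×ˢ Ioo (-π) π) :=
    (hcont.integrableOn_compact (isCompact_Icc.prod isCompact_Icc)).mono_set
      (prod_mono_right Ioo_subset_Icc_self)
  calc ∫ z in A, f z = ∫ z, A.indicator f (z + b) := by
        rw [integral_add_right_eq_self,
          integral_indicator (measurableSet_closedBall.diff measurableSet_ball)]
    _ = ∫ p in Icc r₀ r₁ ×ˢ Ioo (-π) π, g p := by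
        rw [← Complex.integral_comp_polarCoord_symm, setIntegral_congr_fun
          polarCoord.open_target.measurableSet hpolar, setIntegral_indicator
          (measurableSet_Icc.prod MeasurableSet.univ), polarCoord_target, prod_inter_prod,
          inter_univ, inter_eq_right.2 ((Icc_subset_Ioi_iff hr).2 h₀)]
    _ = ∫ t in Icc r₀ r₁, ∫ θ in Ioo (-π) π, g (t, θ) := by
        rw [Measure.volume_eq_prod, setIntegral_prod _ hint]
    _ = ∫ t in r₀..r₁, (2 * π * t) • circleAverage f b t := by
        simp only [g, integral_smul, setIntegral_Ioo_circleMap_eq_circleAverage, smul_smul]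
        rw [integral_Icc_eq_integral_Ioc, ← intervalIntegral.integral_of_le hr]
        congr 1 with t
        ring_nf

/-- Up to the factor `(2π)⁻²`, the dot product of the fields of unit Burgers modulus
centred at `a` and `b`: `dis 1 a z` corresponds to `I * conj (z - a)⁻¹ / (2π)`. -/
noncomputable def pairKernel (a b z : ℂ) : ℝ := ((z - a)⁻¹ * conj (z - b)⁻¹).re

lemma measurable_pairKernel (a b : ℂ) : Measurable (pairKernel a b) := by
  unfold pairKernel; fun_prop

lemma continuousOn_pairKernel {a b : ℂ} {s : Set ℂ} (ha : a ∉ s) (hb : b ∉ s) :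
    ContinuousOn (pairKernel a b) s := by
  have hne : ∀ {c : ℂ}, c ∉ s → ∀ z ∈ s, z - c ≠ 0 := fun hc z hz h =>
    hc (sub_eq_zero.1 h ▸ hz)
  exact Complex.continuous_re.comp_continuousOn <|
    ((continuousOn_id.sub continuousOn_const).inv₀ (hne ha)).mul <|
      Complex.continuous_conj.comp_continuousOn
        ((continuousOn_id.sub continuousOn_const).inv₀ (hne hb))

lemma abs_pairKernel_le (a b z : ℂ) : |pairKernel a b z| ≤ ‖z - a‖⁻¹ * ‖z - b‖⁻¹ := by
  have := Complex.abs_re_le_norm ((z - a)⁻¹ * conj (z - b)⁻¹)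
  rwa [norm_mul, Complex.norm_conj, norm_inv, norm_inv] at this

lemma norm_sub_mul_abs_pairKernel_le (a b z : ℂ) :
    ‖a - b‖ * |pairKernel a b z| ≤ ‖z - a‖⁻¹ + ‖z - b‖⁻¹ := by
  set x := ‖z - a‖
  set y := ‖z - b‖
  have htri : ‖a - b‖ ≤ x + y := by
    simpa [x, norm_sub_rev a z] using norm_sub_le_norm_sub_add_norm_sub a z b
  calc ‖a - b‖ * |pairKernel a b z| ≤ (x + y) * (x⁻¹ * y⁻¹) := by
        gcongr
        exact abs_pairKernel_le a b z
    _ = x * x⁻¹ * y⁻¹ + y * y⁻¹ * x⁻¹ := by ring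
    _ ≤ 1 * y⁻¹ + 1 * x⁻¹ := by gcongr <;> exact mul_inv_le_one
    _ = x⁻¹ + y⁻¹ := by ring

lemma integrableOn_pairKernel {a b : ℂ} (hab : a ≠ b) {R : ℝ} {s : Set ℂ}
    (hsa : s ⊆ ball a R) (hsb : s ⊆ ball b R) : IntegrableOn (pairKernel a b) s := by
  have hr : 0 < ‖a - b‖ := norm_pos_iff.2 (sub_ne_zero.2 hab)
  refine Integrable.mono' ((((integrableOn_ball_inv_norm_sub a R).mono_set hsa).add
    ((integrableOn_ball_inv_norm_sub b R).mono_set hsb)).const_mul ‖a - b‖⁻¹)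
    (measurable_pairKernel a b).aestronglyMeasurable (.of_forall fun z => ?_)
  rw [Real.norm_eq_abs, Pi.add_apply, le_inv_mul_iff₀ hr]
  exact norm_sub_mul_abs_pairKernel_le a b z

lemma norm_sub_mul_abs_setIntegral_pairKernel_le {a b : ℂ} {R : ℝ} (hR : 0 ≤ R) {s : Set ℂ}
    (hsa : s ⊆ ball a R) (hsb : s ⊆ ball b R) :
    ‖a - b‖ * |∫ z in s, pairKernel a b z| ≤ 4 * π * R := by
  have hia := (integrableOn_ball_inv_norm_sub a R).mono_set hsa
  have hib := (integrableOn_ball_inv_norm_sub b R).mono_set hsb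
  have hbound : ∀ z, ‖‖a - b‖ * pairKernel a b z‖ ≤ ‖z - a‖⁻¹ + ‖z - b‖⁻¹ := fun z => by
    simpa [abs_mul] using norm_sub_mul_abs_pairKernel_le a b z
  calc ‖a - b‖ * |∫ z in s, pairKernel a b z| = ‖∫ z in s, ‖a - b‖ * pairKernel a b z‖ := by
        rw [integral_const_mul, norm_mul, norm_norm, Real.norm_eq_abs]
    _ ≤ ∫ z in s, (‖z - a‖⁻¹ + ‖z - b‖⁻¹) :=
        norm_integral_le_of_norm_le (hia.add hib) (.of_forall hbound)
    _ = (∫ z in s, ‖z - a‖⁻¹) + ∫ z in s, ‖z - b‖⁻¹ := integral_add hia hib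
    _ ≤ 2 * π * R + 2 * π * R :=
        add_le_add (setIntegral_inv_norm_sub_le hR hsa) (setIntegral_inv_norm_sub_le hR hsb)
    _ = 4 * π * R := by ring

lemma mul_abs_setIntegral_pairKernel_le {a b : ℂ} {R m : ℝ} (hR : 0 ≤ R) (hm : 0 ≤ m)
    {s : Set ℂ} (hsa : s ⊆ ball a R) (hsb : s ⊆ (ball b m)ᶜ) :
    m * |∫ z in s, pairKernel a b z| ≤ 2 * π * R := by
  have hbound : ∀ z ∈ (ball b m)ᶜ, ‖m * pairKernel a b z‖ ≤ ‖z - a‖⁻¹ := fun z hz => by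
    rw [norm_mul, Real.norm_of_nonneg hm, Real.norm_eq_abs]
    calc m * |pairKernel a b z| ≤ m * (‖z - a‖⁻¹ * ‖z - b‖⁻¹) := by
          gcongr; exact abs_pairKernel_le a b z
      _ ≤ ‖z - a‖⁻¹ * 1 := by
          rw [mul_left_comm]
          gcongr
          exact mul_inv_le_one_of_le₀ (by simpa [dist_eq_norm] using hz) (norm_nonneg _)
      _ = ‖z - a‖⁻¹ := mul_one _
  calc m * |∫ z in s, pairKernel a b z| = ‖∫ z in s, m * pairKernel a b z‖ := by
        rw [integral_const_mul, norm_mul, Real.norm_of_nonneg hm, Real.norm_eq_abs]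
    _ ≤ ∫ z in s, ‖z - a‖⁻¹ :=
        norm_integral_le_of_norm_le ((integrableOn_ball_inv_norm_sub a R).mono_set hsa)
          (ae_restrict_of_ae_restrict_of_subset hsb
            ((ae_restrict_iff' measurableSet_ball.compl).2 (.of_forall hbound)))
    _ ≤ 2 * π * R := setIntegral_inv_norm_sub_le hR hsa

lemma pairKernel_eq_of_mem_sphere {a b z : ℂ} {t : ℝ} (hz : z ∈ sphere b t) :
    pairKernel a b z = (t ^ 2)⁻¹ * ((z - b) / (z - a)).re := by
  rw [mem_sphere, dist_eq_norm] at hz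
  rw [pairKernel, map_inv₀, Complex.inv_def (conj _), Complex.conj_conj, Complex.normSq_conj,
    Complex.normSq_eq_norm_sq, hz, ← mul_assoc, Complex.re_mul_ofReal, mul_comm,
    div_eq_inv_mul]

lemma circleAverage_pairKernel {a b : ℂ} {t : ℝ} (ha : a ∈ ball b t) :
    circleAverage (pairKernel a b) b t = (t ^ 2)⁻¹ := by
  have ht : 0 < t := pos_of_mem_ball ha
  have hmean : circleAverage (fun z => ((z - b) / (z - a)) • (1 : ℂ)) b t = 1 :=
    circleAverage_sub_sub_inv_smul_of_differentiable_on_off_countable countable_empty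
      continuousOn_const (fun _ _ => differentiableAt_const _) (by rwa [abs_of_pos ht])
  have hint : CircleIntegrable (fun z => (z - b) / (z - a)) b t := by
    refine ContinuousOn.circleIntegrable ht.le (continuousOn_id.sub continuousOn_const |>.div
      (continuousOn_id.sub continuousOn_const) fun z hz => sub_ne_zero.2 ?_)
    rintro rfl
    exact (mem_sphere.1 hz).not_lt ha
  rw [circleAverage_congr_sphere (f₂ := fun z => (t ^ 2)⁻¹ • ((z - b) / (z - a)).re)
      fun z hz => pairKernel_eq_of_mem_sphere (by rwa [abs_of_pos ht] at hz),
    circleAverage_fun_smul, smul_eq_mul]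
  have hre := Complex.reCLM.circleAverage_comp_comm hint
  simp only [smul_eq_mul, mul_one] at hmean
  simp only [Function.comp_def, Complex.reCLM_apply, hmean, Complex.one_re] at hre
  rw [hre, mul_one]

lemma integral_annulus_pairKernel {a b : ℂ} {r₀ r₁ : ℝ} (ha : a ∈ ball b r₀) (hr : r₀ ≤ r₁) :
    ∫ z in closedBall b r₁ \ ball b r₀, pairKernel a b z = 2 * π * log (r₁ / r₀) := by
  have h₀ : 0 < r₀ := pos_of_mem_ball ha
  have hcont : ContinuousOn (pairKernel a b) (closedBall b r₁ \ ball b r₀) :=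
    continuousOn_pairKernel (fun h => h.2 ha) (fun h => h.2 (mem_ball_self h₀))
  rw [setIntegral_annulus_eq_circleAverage h₀ hr hcont, intervalIntegral.integral_congr
    (g := fun t => 2 * π * t⁻¹) fun t ht => ?_, intervalIntegral.integral_const_mul,
    integral_inv_of_pos h₀ (h₀.trans_le hr)]
  rw [uIcc_of_le hr] at ht
  rw [circleAverage_pairKernel (ball_subset_ball ht.1 ha), smul_eq_mul]
  field_simp

lemma abs_log_le_of_mem_Icc {x l u : ℝ} (hl : 0 < l) (hx : x ∈ Icc l u) :
    |log x| ≤ |log l| + |log u| := by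
  have h₁ : log l ≤ log x := log_le_log hl hx.1
  have h₂ : log x ≤ log u := log_le_log (hl.trans_le hx.1) hx.2
  rw [abs_le]
  constructor <;> linarith [neg_abs_le (log l), le_abs_self (log u), abs_nonneg (log l),
    abs_nonneg (log u)]

lemma abs_setIntegral_pairKernel_add_log_le_of_near {Ω : Set ℂ} {a b : ℂ} {D ρ : ℝ}
    (hab : a ≠ b) (hΩa : Ω ⊆ ball a D) (hΩb : Ω ⊆ ball b D) (hbΩ : closedBall b ρ ⊆ Ω)
    (hnear : 2 * ‖a - b‖ ≤ ρ) :
    |(∫ z in Ω, pairKernel a b z) + 2 * π * log ‖a - b‖| ≤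
      12 * π + 2 * π * |log (ρ / 2)| + 2 * π * D / ρ := by
  set r := ‖a - b‖
  have hr : 0 < r := norm_pos_iff.2 (sub_ne_zero.2 hab)
  have hρ : 0 < ρ := by linarith
  have hD : 0 ≤ D := (pos_of_mem_ball (hΩa (hbΩ (mem_closedBall_self hρ.le)))).le
  have hab' : a ∈ ball b (2 * r) := by rw [mem_ball, dist_eq_norm]; linarith
  have hdisc : ball b (2 * r) ⊆ closedBall b ρ := ball_subset_closedBall.trans
    (closedBall_subset_closedBall hnear)
  set I₁ := ∫ z in ball b (2 * r), pairKernel a b z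
  set I₂ := ∫ z in closedBall b ρ \ ball b (2 * r), pairKernel a b z
  set I₃ := ∫ z in Ω \ closedBall b ρ, pairKernel a b z
  have hsplit : ∫ z in Ω, pairKernel a b z = I₁ + I₂ + I₃ := by
    rw [← integral_inter_add_sdiff measurableSet_closedBall
        (integrableOn_pairKernel hab hΩa hΩb), inter_eq_right.2 hbΩ,
      ← integral_inter_add_sdiff measurableSet_ball
        (integrableOn_pairKernel hab (hbΩ.trans hΩa) (hbΩ.trans hΩb)), inter_eq_right.2 hdisc]
  have hI₁ : |I₁| ≤ 12 * π := by
    have hsa : ball b (2 * r) ⊆ ball a (3 * r) := fun z hz => by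
      rw [mem_ball, dist_eq_norm] at hz ⊢
      linarith [norm_sub_le_norm_sub_add_norm_sub z b a, norm_sub_rev b a]
    have := norm_sub_mul_abs_setIntegral_pairKernel_le (by positivity) hsa
      (ball_subset_ball (by linarith))
    nlinarith [abs_nonneg I₁]
  have hI₂ : I₂ + 2 * π * log r = 2 * π * log (ρ / 2) := by
    rw [show I₂ = _ from integral_annulus_pairKernel hab' hnear, div_mul_eq_div_div,
      log_div (by positivity) hr.ne']
    ring
  have hI₃ : |I₃| ≤ 2 * π * D / ρ := by
    rw [le_div_iff₀ hρ, mul_comm]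
    exact mul_abs_setIntegral_pairKernel_le hD hρ.le (sdiff_subset.trans hΩa)
      fun z hz h => hz.2 (ball_subset_closedBall h)
  calc |(∫ z in Ω, pairKernel a b z) + 2 * π * log r|
      = |I₁ + 2 * π * log (ρ / 2) + I₃| := by rw [hsplit, ← hI₂]; ring_nf
    _ ≤ |I₁| + |2 * π * log (ρ / 2)| + |I₃| := abs_add_three _ _ _
    _ ≤ 12 * π + 2 * π * |log (ρ / 2)| + 2 * π * D / ρ := by
        rw [abs_mul, abs_of_pos (by positivity : 0 < 2 * π)]
        linarith

lemma abs_setIntegral_pairKernel_add_log_le_of_far {Ω : Set ℂ} {a b : ℂ} {D ρ : ℝ}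
    (hρ : 0 < ρ) (hab : a ≠ b) (hΩa : Ω ⊆ ball a D) (hΩb : Ω ⊆ ball b D) (hb : b ∈ Ω)
    (hfar : ρ ≤ 2 * ‖a - b‖) :
    |(∫ z in Ω, pairKernel a b z) + 2 * π * log ‖a - b‖| ≤
      8 * π * D / ρ + 2 * π * (|log (ρ / 2)| + |log D|) := by
  set r := ‖a - b‖
  have hr : 0 < r := norm_pos_iff.2 (sub_ne_zero.2 hab)
  have hrD : r < D := by simpa [dist_eq_norm, norm_sub_rev, r] using hΩa hb
  have hI : |∫ z in Ω, pairKernel a b z| ≤ 8 * π * D / ρ := by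
    have := norm_sub_mul_abs_setIntegral_pairKernel_le (hr.trans hrD).le hΩa hΩb
    rw [le_div_iff₀ hρ]
    nlinarith [abs_nonneg (∫ z in Ω, pairKernel a b z), pi_pos]
  have hlog : |log r| ≤ |log (ρ / 2)| + |log D| :=
    abs_log_le_of_mem_Icc (by positivity) ⟨by linarith, hrD.le⟩
  calc |(∫ z in Ω, pairKernel a b z) + 2 * π * log r|
      ≤ |∫ z in Ω, pairKernel a b z| + |2 * π * log r| := abs_add_le _ _
    _ = |∫ z in Ω, pairKernel a b z| + 2 * π * |log r| := by
        rw [abs_mul, abs_of_pos (by positivity : (0 : ℝ) < 2 * π)]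
    _ ≤ _ := by gcongr

theorem abs_setIntegral_pairKernel_add_log_le {Ω : Set ℂ} {a b : ℂ} {D ρ : ℝ} (hρ : 0 < ρ)
    (hab : a ≠ b) (hΩa : Ω ⊆ ball a D) (hΩb : Ω ⊆ ball b D) (hbΩ : closedBall b ρ ⊆ Ω) :
    |(∫ z in Ω, pairKernel a b z) + 2 * π * log ‖a - b‖| ≤
      12 * π + 8 * π * D / ρ + 2 * π * (|log (ρ / 2)| + |log D|) := by
  have hD : 0 ≤ D := (pos_of_mem_ball (hΩa (hbΩ (mem_closedBall_self hρ.le)))).le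
  rcases le_total (2 * ‖a - b‖) ρ with hnear | hfar
  · refine (abs_setIntegral_pairKernel_add_log_le_of_near hab hΩa hΩb hbΩ hnear).trans ?_
    have : 2 * π * D / ρ ≤ 8 * π * D / ρ := by gcongr; norm_num
    nlinarith [abs_nonneg (log D), pi_pos]
  · refine (abs_setIntegral_pairKernel_add_log_le_of_far hρ hab hΩa hΩb
      (hbΩ (mem_closedBall_self hρ.le)) hfar).trans ?_
    linarith [pi_pos]

lemma dot_comm (p q : ℝ × ℝ) : dot p q = dot q p := by
  simp only [dot]; ring

lemma dot_dis_dis (β₁ β₂ : ℝ) (a b z : ℂ) :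
    dot (dis β₁ (a.re, a.im) (z.re, z.im)) (dis β₂ (b.re, b.im) (z.re, z.im)) =
      β₁ * β₂ / (4 * π ^ 2) * pairKernel a b z := by
  simp only [dot, dis, perp, pairKernel, Prod.mk_sub_mk, Prod.smul_mk, smul_eq_mul,
    Complex.mul_re, Complex.inv_re, Complex.inv_im, Complex.conj_re, Complex.conj_im,
    Complex.sub_re, Complex.sub_im, Complex.normSq_apply, map_inv₀, div_eq_mul_inv, mul_inv]
  ring

lemma abs_log_sub_log_le_log {x y c : ℝ} (hy : 0 < y) (hyx : y ≤ x) (hxy : x ≤ c * y) :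
    |log x - log y| ≤ log c := by
  have hx : 0 < x := hy.trans_le hyx
  rw [← log_div hx.ne' hy.ne', abs_of_nonneg (log_nonneg ((one_le_div hy).2 hyx))]
  exact log_le_log (div_pos hx hy) ((div_le_iff₀ hy).2 hxy)

lemma dist_measurableEquivRealProd_le (z w : ℂ) :
    dist (Complex.measurableEquivRealProd z) (Complex.measurableEquivRealProd w) ≤ dist z w := by
  simpa using Complex.lipschitz_equivRealProd.dist_le_mul z w

lemma dist_le_sqrt_two_mul_dist_measurableEquivRealProd (z w : ℂ) :
    dist z w ≤
      √2 * dist (Complex.measurableEquivRealProd z) (Complex.measurableEquivRealProd w) := by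
  simpa using Complex.antilipschitz_equivRealProd.le_mul_dist z w

lemma exists_abs_setIntegral_pairKernel_add_log_le {Ω : Set ℂ} (hΩ : Bornology.IsBounded Ω)
    {ρ : ℝ} (hρ : 0 < ρ) :
    ∃ M : ℝ, ∀ a b : ℂ, a ∈ Ω → b ∈ Ω → a ≠ b → closedBall b ρ ⊆ Ω →
      |(∫ z in Ω, pairKernel a b z) + 2 * π * log ‖a - b‖| ≤ M := by
  have hΩD : ∀ c ∈ Ω, Ω ⊆ ball c (diam Ω + 1) := fun c hc z hz =>
    (dist_le_diam_of_mem hΩ hz hc).trans_lt (lt_add_one _)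
  exact ⟨_, fun a b ha hb hab hbΩ =>
    abs_setIntegral_pairKernel_add_log_le hρ hab (hΩD a ha) (hΩD b hb) hbΩ⟩

lemma closedBall_half_subset_preimage_measurableEquivRealProd {Ω : Set (ℝ × ℝ)} {b : ℂ} {δ : ℝ}
    (hδ : 0 < δ) (hb : δ ≤ infDist (Complex.measurableEquivRealProd b) Ωᶜ) :
    closedBall b (δ / 2) ⊆ Complex.measurableEquivRealProd ⁻¹' Ω := fun z hz =>
  ball_infDist_compl_subset (x := Complex.measurableEquivRealProd b) <| mem_ball.2 <|
    hb.trans_lt' <|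
      (dist_measurableEquivRealProd_le z b).trans_lt
        ((mem_closedBall.1 hz).trans_lt (half_lt_self hδ))

lemma abs_log_norm_sub_sub_log_dist_measurableEquivRealProd_le {a b : ℂ} (hab : a ≠ b) :
    |log ‖a - b‖ - log (dist (Complex.measurableEquivRealProd a)
      (Complex.measurableEquivRealProd b))| ≤ log √2 := by
  rw [← dist_eq_norm]
  exact abs_log_sub_log_le_log (dist_pos.2 (Complex.measurableEquivRealProd.injective.ne hab))
    (dist_measurableEquivRealProd_le a b) (dist_le_sqrt_two_mul_dist_measurableEquivRealProd a b)

lemma setIntegral_interaction_eq (C K R bui bwi buj bwj : ℝ) (Ω : Set (ℝ × ℝ)) (a b : ℂ) :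
    let e := Complex.measurableEquivRealProd
    ∫ z in Ω, (C * dot (dis bui (e a) z) (dis buj (e b) z)
        + K * dot (dis bwi (e a) z) (dis bwj (e b) z)
        + R * dot (dis bui (e a) z) (dis bwj (e b) z)
        + R * dot (dis buj (e b) z) (dis bwi (e a) z)) =
      (C * bui * buj + K * bwi * bwj + R * bui * bwj + R * bwi * buj) / (4 * π ^ 2) *
        ∫ w in e ⁻¹' Ω, pairKernel a b w := by
  intro e
  rw [← Complex.volume_preserving_equiv_real_prod.setIntegral_preimage_emb
    e.measurableEmbedding, ← integral_const_mul]
  congr 1 with w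
  simp only [e, Complex.measurableEquivRealProd_apply]
  rw [dot_comm (dis buj _ _), dot_dis_dis, dot_dis_dis, dot_dis_dis, dot_dis_dis]
  ring

theorem stmt14_general (C K R : ℝ)
    (Ω : Set (ℝ × ℝ)) (hΩb : Bornology.IsBounded Ω)
    (bui bwi buj bwj : ℝ) (δ : ℝ) (hδ : 0 < δ) :
    ∃ M : ℝ, ∀ di dj : ℝ × ℝ, di ∈ Ω → dj ∈ Ω → di ≠ dj →
      δ ≤ Metric.infDist di Ωᶜ → δ ≤ Metric.infDist dj Ωᶜ →
      |(∫ z in Ω, (C * dot (dis bui di z) (dis buj dj z)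
            + K * dot (dis bwi di z) (dis bwj dj z)
            + R * dot (dis bui di z) (dis bwj dj z)
            + R * dot (dis buj dj z) (dis bwi di z)))
        - (C * bui * buj + K * bwi * bwj + R * bui * bwj + R * bwi * buj) / (2 * π)
            * Real.log (1 / dist di dj)| ≤ M := by
  set e := Complex.measurableEquivRealProd
  set S := (C * bui * buj + K * bwi * bwj + R * bui * bwj + R * bwi * buj) / (4 * π ^ 2)
  obtain ⟨M, hM⟩ := exists_abs_setIntegral_pairKernel_add_log_le
    (Complex.antilipschitz_equivRealProd.isBounded_preimage hΩb) (half_pos hδ)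
  refine ⟨|S| * (M + 2 * π * log √2), ?_⟩
  intro di dj hdi hdj hne _ hδj
  obtain ⟨a, rfl⟩ := e.surjective di
  obtain ⟨b, rfl⟩ := e.surjective dj
  have hab : a ≠ b := ne_of_apply_ne e hne
  have hmain := hM a b hdi hdj hab (closedBall_half_subset_preimage_measurableEquivRealProd hδ hδj)
  have hlog := abs_log_norm_sub_sub_log_dist_measurableEquivRealProd_le hab
  rw [setIntegral_interaction_eq, show (C * bui * buj + K * bwi * bwj + R * bui * bwj +
    R * bwi * buj) / (2 * π) = S * (2 * π) by simp only [S]; field_simp; ring, one_div, log_inv]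
  set I := ∫ w in e ⁻¹' Ω, pairKernel a b w
  calc |S * I - S * (2 * π) * -log (dist (e a) (e b))|
      = |S| * |(I + 2 * π * log ‖a - b‖) - 2 * π * (log ‖a - b‖ - log (dist (e a) (e b)))| := by
        rw [← abs_mul]; ring_nf
    _ ≤ |S| * (M + 2 * π * log √2) := by
        gcongr
        refine (abs_sub _ _).trans (add_le_add hmain ?_)
        rw [abs_mul, abs_of_pos (by positivity : (0 : ℝ) < 2 * π)]
        gcongr

/-- Interaction energy law: the interaction energy of two dislocations
equals `((C b_u^i b_u^j + K b_w^i b_w^j + R b_u^i b_w^j + R b_w^i b_u^j)/(2π)) ln(1/|d_i−d_j|)`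
up to an `O(1)` term bounded uniformly over configurations staying at distance `≥ δ`
from `∂Ω`. -/
theorem stmt14 (C K R : ℝ) (hC : 0 < C) (hK : 0 < K) (hCK : R ^ 2 < C * K)
    (Ω : Set (ℝ × ℝ)) (hΩo : IsOpen Ω) (hΩb : Bornology.IsBounded Ω)
    (bui bwi buj bwj : ℝ) (δ : ℝ) (hδ : 0 < δ) :
    ∃ M : ℝ, ∀ di dj : ℝ × ℝ, di ∈ Ω → dj ∈ Ω → di ≠ dj →
      δ ≤ Metric.infDist di Ωᶜ → δ ≤ Metric.infDist dj Ωᶜ →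
      |(∫ z in Ω, (C * dot (dis bui di z) (dis buj dj z)
            + K * dot (dis bwi di z) (dis bwj dj z)
            + R * dot (dis bui di z) (dis bwj dj z)
            + R * dot (dis buj dj z) (dis bwi di z)))
        - (C * bui * buj + K * bwi * bwj + R * bui * bwj + R * bwi * buj) / (2 * π)
            * Real.log (1 / dist di dj)| ≤ M :=
  stmt14_general C K R Ω hΩb bui bwi buj bwj δ hδ
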